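/- Let P be encoded by a hook code (h_1^{l_1},...,h_n^{l_n}) in a t × s box with h_n > 0, and let P̄ be encoded by ((h_1−1)^{l_1},...,(h_n−1)^{l_n}) in a t × (s−1) box. With κ computed by the formula κ = s + max{t+1-s, 0, τ_1,...,τ_n} (using (s,t)) and κ̄ computed analogously using (s−1, t), one has κ(P) = κ̄(P̄) if κ̄(P̄) ≥ s, and κ(P) = s if κ̄(P̄) = s−1. -/

import Mathlib

/-- `κ` computed from a hook code `(h_1^{l_1},…,h_n^{l_n})` in a `t × s` box:
`κ = s + max{t+1-s, 0, τ_1, …, τ_n}` where `τ_k = (l_k + ⋯ + l_n) - h_k`. -/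
def kappaCode (s t n : ℕ) (h l : Fin n → ℕ) : ℤ :=
  s + Finset.fold max (max ((t : ℤ) + 1 - s) 0)
    (fun k => (∑ i ∈ Finset.univ.filter (fun i => k ≤ i), (l i : ℤ)) - h k) Finset.univ

namespace Finset

variable {α β : Type*}

theorem fold_max_max_init [LinearOrder β] (s : Finset α) (f : α → β) (b c : β) :
    s.fold max (max b c) f = max (s.fold max b f) c :=
  eq_of_forall_ge_iff fun d => by
    simp only [fold_max_le, max_le_iff]
    tauto

theorem fold_max_add_const [LinearOrder β] [Add β] [AddRightMono β]
    (s : Finset α) (f : α → β) (b c : β) :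
    s.fold max (b + c) (fun x => f x + c) = s.fold max b f + c :=
  fold_hom (m := (· + c)) fun x y => (max_add_add_right x y c).symm

end Finset

def hookTau {n : ℕ} (h l : Fin n → ℕ) (k : Fin n) : ℤ :=
  (∑ i ∈ Finset.univ.filter (fun i => k ≤ i), (l i : ℤ)) - h k

theorem kappaCode_eq (s t n : ℕ) (h l : Fin n → ℕ) :
    kappaCode s t n h l = s + max (Finset.univ.fold max ((t : ℤ) + 1 - s) (hookTau h l)) 0 := by
  rw [kappaCode, Finset.fold_max_max_init]
  rfl

theorem hookTau_sub_one {n : ℕ} {h : Fin n → ℕ} (l : Fin n → ℕ) (hh : ∀ k, 1 ≤ h k) :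
    hookTau (fun k => h k - 1) l = hookTau h l + 1 := by
  funext k
  have := hh k
  simp only [hookTau, Pi.add_apply, Pi.one_apply]
  omega

/-- Lowering `s` by one raises the initial value `t + 1 - s` and every `τ_k` by one, so only
the floor `0` of the maximum moves. -/
theorem kappaCode_eq_max_kappaCode_pred {s t n : ℕ} {h : Fin n → ℕ} (l : Fin n → ℕ)
    (hs : 1 ≤ s) (hh : ∀ k, 1 ≤ h k) :
    kappaCode s t n h l = max (kappaCode (s - 1) t n (fun k => h k - 1) l) s := by
  have hinit : (t : ℤ) + 1 - ↑(s - 1) = (t + 1 - s) + 1 := by omega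
  have hshift : Finset.univ.fold max ((t : ℤ) + 1 - ↑(s - 1)) (hookTau (fun k => h k - 1) l)
      = Finset.univ.fold max ((t : ℤ) + 1 - s) (hookTau h l) + 1 := by
    rw [hinit, hookTau_sub_one l hh]
    exact Finset.fold_max_add_const _ _ _ _
  rw [kappaCode_eq, kappaCode_eq, hshift]
  omega

theorem kappa_lastPos_step_general (s t n : ℕ) (hn : 0 < n) (h l : Fin n → ℕ)
    (hh : StrictAnti h) (hhs : ∀ k, h k ≤ s)
    (hlast : 0 < h ⟨n - 1, Nat.sub_lt hn Nat.one_pos⟩) :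
    ((s : ℤ) ≤ kappaCode (s - 1) t n (fun k => h k - 1) l →
      kappaCode s t n h l = kappaCode (s - 1) t n (fun k => h k - 1) l) ∧
    (kappaCode (s - 1) t n (fun k => h k - 1) l = (s : ℤ) - 1 →
      kappaCode s t n h l = s) := by
  have hpos : ∀ k, 1 ≤ h k := fun k =>
    hlast.trans_le (hh.antitone (Fin.mk_le_mk.mpr (by omega)))
  have hs : 1 ≤ s := (hpos ⟨0, hn⟩).trans (hhs _)
  rw [kappaCode_eq_max_kappaCode_pred l hs hpos]
  exact ⟨max_eq_left, fun hpred => by rw [hpred]; omega⟩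

/-- If `P` has hook code `(h_1^{l_1},…,h_n^{l_n})` in a `t × s` box with `h_n > 0`, and `P̄`
has code `((h_1-1)^{l_1},…,(h_n-1)^{l_n})` in a `t × (s-1)` box, then `κ(P) = κ̄(P̄)` if
`κ̄(P̄) ≥ s`, and `κ(P) = s` if `κ̄(P̄) = s - 1`. -/
theorem kappa_lastPos_step (s t n : ℕ) (hn : 0 < n) (h l : Fin n → ℕ)
    (hh : StrictAnti h) (hhs : ∀ k, h k ≤ s) (hl : ∀ k, 1 ≤ l k)
    (hsum : ∑ k, l k = t) (hlast : 0 < h ⟨n - 1, Nat.sub_lt hn Nat.one_pos⟩) :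
    ((s : ℤ) ≤ kappaCode (s - 1) t n (fun k => h k - 1) l →
      kappaCode s t n h l = kappaCode (s - 1) t n (fun k => h k - 1) l) ∧
    (kappaCode (s - 1) t n (fun k => h k - 1) l = (s : ℤ) - 1 →
      kappaCode s t n h l = s) :=
  kappa_lastPos_step_general s t n hn h l hh hhs hlast
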